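/- Diagonal negativity: let h ∈ ℝ^d, let W ∈ ℝ^{C×d} with operator norm ≤ M, let y, c* be class indices, p the softmax of Wh with α := 1 − p_y ≥ α₀, suppose p_{c*} ≥ α₀ − ζ and Σ_{c∉{y,c*}} p_c ≤ ζ, and suppose ⟨ψ_ε(h), W_y − W_{c*}⟩ ≥ a₀·√d. Then ⟨ψ_ε(h), Wᵀ(p − e_y)⟩ ≤ −((α₀ − ζ)a₀ − 2ζM)·√d. -/

import Mathlib

/-!
Write `u = Wψ`; then `|u c| ≤ ‖W‖ ‖ψ‖ ≤ M √d`, and since `∑ p = 1` the drift is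
`∑ c, p c (u c - u y)`. The runner-up term is `-p c* (u y - u c*) ≤ -(α₀ - ζ) a₀ √d`, and every other
class contributes at most `2 M √d` times its probability, a total mass of at most `ζ`.
-/

open Finset Real

lemma abs_div_sqrt_sq_add_sq_le_one (a ε : ℝ) : |a / √(a ^ 2 + ε ^ 2)| ≤ 1 := by
  rw [abs_div, abs_of_nonneg (sqrt_nonneg _)]
  refine div_le_one_of_le₀ ?_ (sqrt_nonneg _)
  rw [← sqrt_sq_eq_abs]
  exact sqrt_le_sqrt (le_add_of_nonneg_right (sq_nonneg ε))

lemma EuclideanSpace.norm_le_sqrt_card_of_abs_le_one {ι : Type*} [Fintype ι]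
    (x : EuclideanSpace ℝ ι) (hx : ∀ i, |x i| ≤ 1) : ‖x‖ ≤ √(Fintype.card ι) := by
  rw [EuclideanSpace.norm_eq]
  gcongr
  calc ∑ i, ‖x i‖ ^ 2 ≤ ∑ _i : ι, (1 : ℝ) := by
        gcongr with i
        exact pow_le_one₀ (norm_nonneg _) (hx i)
    _ = Fintype.card ι := by simp

lemma sum_exp_div_sum_exp {ι : Type*} [Fintype ι] [Nonempty ι] (z : ι → ℝ) :
    ∑ c, exp (z c) / ∑ c', exp (z c') = 1 := by
  rw [← sum_div, div_self (sum_pos (fun c _ => exp_pos (z c)) univ_nonempty).ne']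

lemma EuclideanSpace.inner_sub_single_eq_sum {ι : Type*} [Fintype ι] [DecidableEq ι]
    (u p : EuclideanSpace ℝ ι) (hp : ∑ c, p c = 1) (y : ι) :
    inner ℝ u (p - EuclideanSpace.single y 1) = ∑ c, p c * (u c - u y) := by
  rw [inner_sub_right, EuclideanSpace.inner_single_right, PiLp.inner_apply]
  simp only [mul_sub, sum_sub_distrib, ← sum_mul, hp, one_mul, RCLike.inner_apply, conj_trivial]

lemma sum_eq_add_add_sum_sdiff_pair {ι M : Type*} [Fintype ι] [DecidableEq ι] [AddCommMonoid M]
    (f : ι → M) {a b : ι} (hab : a ≠ b) :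
    ∑ i, f i = f a + f b + ∑ i ∈ univ \ {a, b}, f i := by
  rw [← sum_sdiff (subset_univ {a, b}), sum_pair hab, add_comm]

lemma sum_mul_sub_apply_le_of_gap {ι : Type*} [Fintype ι] [DecidableEq ι] (u p : ι → ℝ) {y c : ι}
    (hyc : c ≠ y) {B a β ζ : ℝ} (hp : ∀ i, 0 ≤ p i) (hu : ∀ i, |u i| ≤ B) (ha : 0 ≤ a)
    (hgap : a ≤ u y - u c) (hβ : β ≤ p c) (hrest : ∑ i ∈ univ \ {y, c}, p i ≤ ζ) :
    ∑ i, p i * (u i - u y) ≤ -(β * a) + 2 * B * ζ := by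
  have hB : 0 ≤ B := (abs_nonneg _).trans (hu y)
  have hrunner_up : β * a ≤ p c * (u y - u c) := calc
    β * a ≤ p c * a := mul_le_mul_of_nonneg_right hβ ha
    _ ≤ p c * (u y - u c) := mul_le_mul_of_nonneg_left hgap (hp c)
  have hothers : ∑ i ∈ univ \ {y, c}, p i * (u i - u y) ≤ 2 * B * ζ := calc
    _ ≤ ∑ i ∈ univ \ {y, c}, p i * (2 * B) := by
        gcongr with i
        · exact hp i
        · linarith [(abs_le.1 (hu i)).2, (abs_le.1 (hu y)).1]
    _ = 2 * B * ∑ i ∈ univ \ {y, c}, p i := by rw [← sum_mul, mul_comm]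
    _ ≤ 2 * B * ζ := by gcongr
  rw [sum_eq_add_add_sum_sdiff_pair _ hyc.symm, sub_self, mul_zero, zero_add]
  linarith

theorem diagonal_negativity_general {C d : ℕ} (ε : ℝ)
    (h ψ : EuclideanSpace ℝ (Fin d))
    (hψ : ∀ j, ψ j = h j / Real.sqrt ((h j) ^ 2 + ε ^ 2))
    (W : EuclideanSpace ℝ (Fin d) →L[ℝ] EuclideanSpace ℝ (Fin C))
    (M : ℝ) (hW : ‖W‖ ≤ M)
    (y cstar : Fin C) (hyc : cstar ≠ y)
    (p : EuclideanSpace ℝ (Fin C))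
    (hp : ∀ c, p c = Real.exp (W h c) / ∑ c', Real.exp (W h c'))
    (α₀ ζ a₀ : ℝ) (ha₀ : 0 ≤ a₀)
    (hcs : α₀ - ζ ≤ p cstar)
    (hrest : ∑ c ∈ Finset.univ \ {y, cstar}, p c ≤ ζ)
    (halign : a₀ * Real.sqrt d ≤
      (inner ℝ ψ ((ContinuousLinearMap.adjoint W) (EuclideanSpace.single y (1 : ℝ))
        - (ContinuousLinearMap.adjoint W) (EuclideanSpace.single cstar (1 : ℝ))) : ℝ)) :
    (inner ℝ ψ ((ContinuousLinearMap.adjoint W) (p - EuclideanSpace.single y (1 : ℝ))) : ℝ) ≤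
      -((α₀ - ζ) * a₀ - 2 * ζ * M) * Real.sqrt d := by
  have hψ_norm : ‖ψ‖ ≤ √d := by
    simpa using EuclideanSpace.norm_le_sqrt_card_of_abs_le_one ψ
      fun j => hψ j ▸ abs_div_sqrt_sq_add_sq_le_one _ _
  have hWψ : ∀ c, |W ψ c| ≤ M * √d := fun c => calc
    |W ψ c| ≤ ‖W ψ‖ := PiLp.norm_apply_le (W ψ) c
    _ ≤ ‖W‖ * ‖ψ‖ := W.le_opNorm ψ
    _ ≤ M * √d := mul_le_mul hW hψ_norm (norm_nonneg _) ((norm_nonneg W).trans hW)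
  have hp_nonneg : ∀ c, 0 ≤ p c := fun c => hp c ▸ by positivity
  have hp_sum : ∑ c, p c = 1 := by
    simp only [hp]
    have : Nonempty (Fin C) := ⟨y⟩
    exact sum_exp_div_sum_exp _
  have hgap : a₀ * √d ≤ W ψ y - W ψ cstar := by
    simpa [← map_sub, ContinuousLinearMap.adjoint_inner_right, inner_sub_right,
      EuclideanSpace.inner_single_right] using halign
  rw [ContinuousLinearMap.adjoint_inner_right, EuclideanSpace.inner_sub_single_eq_sum _ _ hp_sum]
  calc _ ≤ -((α₀ - ζ) * (a₀ * √d)) + 2 * (M * √d) * ζ :=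
        sum_mul_sub_apply_le_of_gap _ _ hyc hp_nonneg hWψ (by positivity) hgap hcs hrest
    _ = _ := by ring

theorem diagonal_negativity {C d : ℕ} (ε : ℝ) (hε : 0 < ε)
    (h ψ : EuclideanSpace ℝ (Fin d))
    (hψ : ∀ j, ψ j = h j / Real.sqrt ((h j) ^ 2 + ε ^ 2))
    (W : EuclideanSpace ℝ (Fin d) →L[ℝ] EuclideanSpace ℝ (Fin C))
    (M : ℝ) (hW : ‖W‖ ≤ M)
    (y cstar : Fin C) (hyc : cstar ≠ y)
    (p : EuclideanSpace ℝ (Fin C))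
    (hp : ∀ c, p c = Real.exp (W h c) / ∑ c', Real.exp (W h c'))
    (α₀ ζ a₀ : ℝ) (ha₀ : 0 ≤ a₀) (hζ : 0 ≤ ζ) (hζα : ζ ≤ α₀)
    (hα : α₀ ≤ 1 - p y)
    (hcs : α₀ - ζ ≤ p cstar)
    (hrest : ∑ c ∈ Finset.univ \ {y, cstar}, p c ≤ ζ)
    (halign : a₀ * Real.sqrt d ≤
      (inner ℝ ψ ((ContinuousLinearMap.adjoint W) (EuclideanSpace.single y (1 : ℝ))
        - (ContinuousLinearMap.adjoint W) (EuclideanSpace.single cstar (1 : ℝ))) : ℝ)) :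
    (inner ℝ ψ ((ContinuousLinearMap.adjoint W) (p - EuclideanSpace.single y (1 : ℝ))) : ℝ) ≤
      -((α₀ - ζ) * a₀ - 2 * ζ * M) * Real.sqrt d :=
  diagonal_negativity_general ε h ψ hψ W M hW y cstar hyc p hp α₀ ζ a₀ ha₀ hcs hrest halign
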